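/- Fix a real number q > 1 and δ ∈ [−1/2, 0). Then for every integer m ≥ 0: (a) φ_{iδ}(2m+1) is a positive real number; (b) for every real α with −τ/2 < α < τ/2 and α ≠ 0, |φ_{α+iδ}(2m+1)| < φ_{iδ}(2m+1); and (c) φ_{τ/2+iδ}(2m+1) = −φ_{iδ}(2m+1). -/

import Mathlib

/-!
Write `B = q^{iz}` and `C = q^{-iz}`, so that `B C = 1`. The numerator of `φ_z(2m+1)` is then
`B - C` times `P(B, C) = q (B^{2m+1} + C^{2m+1}) + (q - 1) ∑_{k<m} (B^{2k+1} + C^{2k+1})`, so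
`φ_z(2m+1) = q^{-(2m+1)/2} / (q + 1) · P(B, C)`. For `z = α + iδ` one has
`B = e^{iα log q} q^{-δ}` and `C = e^{-iα log q} q^{δ}`. At `α = 0` every term of `P` is positive.
For `0 < |α| < τ/2` the triangle inequality `|P(B, C)| ≤ P(|B|, |C|)` is strict already on the
term `B + C`, because `e^{iα log q}` is not real. At `α = τ/2` both `B` and `C` change sign,
and `P` is odd.
-/

/-- `q^w = exp(w log q)`. -/
noncomputable def qpow (q : ℝ) (w : ℂ) : ℂ := Complex.exp (w * (Real.log q : ℂ))

/-- `τ = 2π / log q`. -/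
noncomputable def tauq (q : ℝ) : ℝ := 2 * Real.pi / Real.log q

/-- The elementary spherical function value `φ_z(n)` on a homogeneous tree of degree
`q+1`: `φ_z(0) = 1` and for `n ≥ 1`,
`φ_z(n) = (1/(q+1))·[q^{1-n/2}(q^{iz(n+1)} - q^{-iz(n+1)}) - q^{-n/2}(q^{iz(n-1)} - q^{-iz(n-1)})] / (q^{iz} - q^{-iz})`. -/
noncomputable def phiSph (q : ℝ) (z : ℂ) (n : ℕ) : ℂ :=
  if n = 0 then 1 else
    (1 / ((q : ℂ) + 1)) *
      ((qpow q (1 - (n : ℂ) / 2) *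
          (qpow q (Complex.I * z * ((n : ℂ) + 1)) - qpow q (-(Complex.I * z) * ((n : ℂ) + 1))) -
        qpow q (-(n : ℂ) / 2) *
          (qpow q (Complex.I * z * ((n : ℂ) - 1)) - qpow q (-(Complex.I * z) * ((n : ℂ) - 1)))) /
        (qpow q (Complex.I * z) - qpow q (-(Complex.I * z))))

open Complex Finset ComplexConjugate

section PhiPoly

variable {R : Type*} [CommRing R]

def phiPoly (x b c : R) (m : ℕ) : R :=
  x * (b ^ (2 * m + 1) + c ^ (2 * m + 1)) +
    (x - 1) * ∑ k ∈ range m, (b ^ (2 * k + 1) + c ^ (2 * k + 1))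

theorem sub_mul_phiPoly {b c : R} (h : b * c = 1) (x : R) (m : ℕ) :
    (b - c) * phiPoly x b c m =
      x * (b ^ (2 * m + 2) - c ^ (2 * m + 2)) - (b ^ (2 * m) - c ^ (2 * m)) := by
  induction m with
  | zero => simp [phiPoly]; ring
  | succ m ih =>
    simp only [phiPoly, sum_range_succ] at ih ⊢
    linear_combination
      ih + (b ^ (2 * m) - c ^ (2 * m) - x * (b ^ (2 * m + 2) - c ^ (2 * m + 2))) * h

theorem phiPoly_neg (x b c : R) (m : ℕ) : phiPoly x (-b) (-c) m = -phiPoly x b c m := by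
  have hodd : ∀ k : ℕ,
      (-b) ^ (2 * k + 1) + (-c) ^ (2 * k + 1) = -(b ^ (2 * k + 1) + c ^ (2 * k + 1)) :=
    fun k => by rw [Odd.neg_pow ⟨k, rfl⟩, Odd.neg_pow ⟨k, rfl⟩, neg_add]
  simp only [phiPoly, hodd, sum_neg_distrib]
  ring

end PhiPoly

@[simp, norm_cast]
theorem ofReal_phiPoly (x r s : ℝ) (m : ℕ) :
    ((phiPoly x r s m : ℝ) : ℂ) = phiPoly (x : ℂ) (r : ℂ) (s : ℂ) m := by
  simp [phiPoly]

theorem phiPoly_pos {x r s : ℝ} (hx : 1 ≤ x) (hr : 0 < r) (hs : 0 < s) (m : ℕ) :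
    0 < phiPoly x r s m := by
  have hsum : 0 ≤ ∑ k ∈ range m, (r ^ (2 * k + 1) + s ^ (2 * k + 1)) :=
    sum_nonneg fun k _ => by positivity
  unfold phiPoly
  have hlead : 0 < x * (r ^ (2 * m + 1) + s ^ (2 * m + 1)) := by positivity
  nlinarith

theorem norm_phiPoly_lt {x : ℝ} (hx : 1 < x) {b c : ℂ} (hbc : ‖b + c‖ < ‖b‖ + ‖c‖) (m : ℕ) :
    ‖phiPoly (x : ℂ) b c m‖ < phiPoly x ‖b‖ ‖c‖ m := by
  have hpow : ∀ k : ℕ,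
      ‖b ^ (2 * k + 1) + c ^ (2 * k + 1)‖ ≤ ‖b‖ ^ (2 * k + 1) + ‖c‖ ^ (2 * k + 1) :=
    fun k => (norm_add_le _ _).trans_eq (by rw [norm_pow, norm_pow])
  have hsum : ‖∑ k ∈ range m, (b ^ (2 * k + 1) + c ^ (2 * k + 1))‖ ≤
      ∑ k ∈ range m, ‖b ^ (2 * k + 1) + c ^ (2 * k + 1)‖ := norm_sum_le _ _
  have hx1 : ((x : ℂ) - 1) = ((x - 1 : ℝ) : ℂ) := by push_cast; ring
  calc ‖phiPoly (x : ℂ) b c m‖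
      ≤ x * ‖b ^ (2 * m + 1) + c ^ (2 * m + 1)‖ +
          (x - 1) * ∑ k ∈ range m, ‖b ^ (2 * k + 1) + c ^ (2 * k + 1)‖ := by
        refine (norm_add_le _ _).trans ?_
        rw [norm_mul, norm_mul, hx1, norm_real, norm_real, Real.norm_of_nonneg (by linarith),
          Real.norm_of_nonneg (by linarith)]
        gcongr
    _ < phiPoly x ‖b‖ ‖c‖ m := by
        rcases m.eq_zero_or_pos with rfl | hm
        · simpa [phiPoly] using mul_lt_mul_of_pos_left hbc (by linarith : 0 < x)
        · have hlt : ∑ k ∈ range m, ‖b ^ (2 * k + 1) + c ^ (2 * k + 1)‖ <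
              ∑ k ∈ range m, (‖b‖ ^ (2 * k + 1) + ‖c‖ ^ (2 * k + 1)) :=
            sum_lt_sum (fun k _ => hpow k) ⟨0, mem_range.2 hm, by simpa using hbc⟩
          unfold phiPoly
          exact add_lt_add_of_le_of_lt (by gcongr; exact hpow m)
            (mul_lt_mul_of_pos_left hlt (by linarith))

/-- `u r + ū s = (r + s) Re u + i (r - s) Im u`, whose squared norm falls short of `(r + s)²`
by `4 r s (Im u)²`. -/
theorem norm_mul_add_conj_mul_lt {u : ℂ} (hu : ‖u‖ = 1) (him : u.im ≠ 0) {r s : ℝ}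
    (hr : 0 < r) (hs : 0 < s) : ‖u * r + conj u * s‖ < ‖u * r‖ + ‖conj u * s‖ := by
  rw [norm_mul, norm_mul, RCLike.norm_conj, hu, Complex.norm_of_nonneg hr.le,
    Complex.norm_of_nonneg hs.le, one_mul, one_mul]
  have hu2 : u.re * u.re + u.im * u.im = 1 := by
    rw [← normSq_apply, ← Complex.sq_norm, hu, one_pow]
  refine abs_lt_of_sq_lt_sq' ?_ (by positivity) |>.2
  rw [Complex.sq_norm, normSq_apply]
  simp only [add_re, add_im, mul_re, mul_im, conj_re, conj_im, ofReal_re, ofReal_im]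
  have : 0 < u.im * u.im := mul_self_pos.2 him
  nlinarith [mul_pos hr hs]

section Spherical

variable {q : ℝ}

theorem qpow_add (a b : ℂ) : qpow q (a + b) = qpow q a * qpow q b := by
  rw [qpow, qpow, qpow, add_mul, exp_add]

theorem qpow_natCast_mul (n : ℕ) (w : ℂ) : qpow q (n * w) = qpow q w ^ n := by
  rw [qpow, qpow, mul_assoc, exp_nat_mul]

theorem qpow_mul_qpow_neg (w : ℂ) : qpow q w * qpow q (-w) = 1 := by
  rw [← qpow_add, add_neg_cancel, qpow, zero_mul, exp_zero]

theorem qpow_ofReal (hq : 0 < q) (x : ℝ) : qpow q x = ((q ^ x : ℝ) : ℂ) := by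
  rw [qpow, Real.rpow_def_of_pos hq, ofReal_exp, ofReal_mul, mul_comm]

theorem qpow_I_mul_add_I_mul (hq : 0 < q) (α δ : ℝ) :
    qpow q (I * (α + I * δ)) = exp ((α * Real.log q : ℝ) * I) * ((q ^ (-δ) : ℝ) : ℂ) := by
  rw [← qpow_ofReal hq, qpow, qpow, ← exp_add]
  congr 1
  push_cast
  linear_combination (δ * Real.log q : ℂ) * I_sq

theorem qpow_neg_I_mul_add_I_mul (hq : 0 < q) (α δ : ℝ) :
    qpow q (-(I * (α + I * δ))) = conj (exp ((α * Real.log q : ℝ) * I)) * ((q ^ δ : ℝ) : ℂ) := by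
  rw [← qpow_ofReal hq, qpow, qpow, ← exp_conj, ← exp_add]
  congr 1
  simp only [map_mul, conj_ofReal, conj_I]
  push_cast
  linear_combination (-δ * Real.log q : ℂ) * I_sq

theorem phiSph_two_mul_add_one (hq : 0 < q) {z : ℂ} (hne : qpow q (I * z) ≠ qpow q (-(I * z)))
    (m : ℕ) :
    phiSph q z (2 * m + 1) = ((q ^ (-(2 * m + 1) / 2 : ℝ) / (q + 1) : ℝ) : ℂ) *
      phiPoly (q : ℂ) (qpow q (I * z)) (qpow q (-(I * z))) m := by
  have hplus : ∀ w : ℂ, qpow q (w * (((2 * m + 1 : ℕ) : ℂ) + 1)) = qpow q w ^ (2 * m + 2) := by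
    intro w
    rw [← qpow_natCast_mul]
    congr 1
    push_cast
    ring
  have hminus : ∀ w : ℂ, qpow q (w * (((2 * m + 1 : ℕ) : ℂ) - 1)) = qpow q w ^ (2 * m) := by
    intro w
    rw [← qpow_natCast_mul]
    congr 1
    push_cast
    ring
  have hhalf : qpow q (-((2 * m + 1 : ℕ) : ℂ) / 2) = ((q ^ (-(2 * m + 1) / 2 : ℝ) : ℝ) : ℂ) := by
    rw [← qpow_ofReal hq]
    push_cast
    rfl
  have hone : qpow q (1 - ((2 * m + 1 : ℕ) : ℂ) / 2) =
      q * qpow q (-((2 * m + 1 : ℕ) : ℂ) / 2) := by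
    rw [sub_eq_add_neg, qpow_add, ← neg_div, ← ofReal_one, qpow_ofReal hq, Real.rpow_one]
  rw [phiSph, if_neg (by omega), hplus, hplus, hminus, hminus, hone, hhalf]
  have key := sub_mul_phiPoly (qpow_mul_qpow_neg (q := q) (I * z)) (q : ℂ) m
  push_cast
  field_simp [sub_ne_zero.2 hne]
  rw [← key]
  ring

theorem phiSph_add_I_mul (hq : 1 < q) {δ : ℝ} (hδ : δ ≠ 0) (α : ℝ) (m : ℕ) :
    phiSph q (α + I * δ) (2 * m + 1) = ((q ^ (-(2 * m + 1) / 2 : ℝ) / (q + 1) : ℝ) : ℂ) *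
      phiPoly (q : ℂ) (exp ((α * Real.log q : ℝ) * I) * ((q ^ (-δ) : ℝ) : ℂ))
        (conj (exp ((α * Real.log q : ℝ) * I)) * ((q ^ δ : ℝ) : ℂ)) m := by
  have hq0 : 0 < q := by linarith
  rw [← qpow_I_mul_add_I_mul hq0, ← qpow_neg_I_mul_add_I_mul hq0]
  refine phiSph_two_mul_add_one hq0 (fun h => hδ ?_) m
  have hnorm := congrArg norm h
  rw [qpow_I_mul_add_I_mul hq0, qpow_neg_I_mul_add_I_mul hq0, norm_mul, norm_mul,
    RCLike.norm_conj, norm_exp_ofReal_mul_I, one_mul, one_mul,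
    Complex.norm_of_nonneg (by positivity), Complex.norm_of_nonneg (by positivity),
    Real.rpow_right_inj hq0 hq.ne'] at hnorm
  linarith

theorem phiSph_I_mul (hq : 1 < q) {δ : ℝ} (hδ : δ ≠ 0) (m : ℕ) :
    phiSph q (I * δ) (2 * m + 1) =
      ((q ^ (-(2 * m + 1) / 2 : ℝ) / (q + 1) * phiPoly q (q ^ (-δ)) (q ^ δ) m : ℝ) : ℂ) := by
  have h := phiSph_add_I_mul hq hδ 0 m
  rwa [zero_mul, ofReal_zero, zero_mul, exp_zero, map_one, one_mul, one_mul, zero_add,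
    ← ofReal_phiPoly, ← ofReal_mul] at h

theorem norm_phiSph_add_I_mul_lt (hq : 1 < q) {δ : ℝ} (hδ : δ ≠ 0) {α : ℝ}
    (hα : Real.sin (α * Real.log q) ≠ 0) (m : ℕ) :
    ‖phiSph q (α + I * δ) (2 * m + 1)‖ < (phiSph q (I * δ) (2 * m + 1)).re := by
  have hr : 0 < q ^ (-δ) := by positivity
  have hs : 0 < q ^ δ := by positivity
  set u := exp ((α * Real.log q : ℝ) * I)
  have hu : ‖u‖ = 1 := norm_exp_ofReal_mul_I _
  have hur : ‖u * ((q ^ (-δ) : ℝ) : ℂ)‖ = q ^ (-δ) := by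
    rw [norm_mul, hu, one_mul, Complex.norm_of_nonneg hr.le]
  have hus : ‖conj u * ((q ^ δ : ℝ) : ℂ)‖ = q ^ δ := by
    rw [norm_mul, RCLike.norm_conj, hu, one_mul, Complex.norm_of_nonneg hs.le]
  have hbc := norm_mul_add_conj_mul_lt hu (by rwa [exp_ofReal_mul_I_im]) hr hs
  rw [phiSph_add_I_mul hq hδ, phiSph_I_mul hq hδ, ofReal_re, norm_mul,
    Complex.norm_of_nonneg (by positivity)]
  refine mul_lt_mul_of_pos_left ?_ (by positivity)
  simpa only [hur, hus] using norm_phiPoly_lt hq hbc m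

theorem tauq_div_two_mul_log (hq : 1 < q) : tauq q / 2 * Real.log q = Real.pi := by
  have := Real.log_pos hq
  rw [tauq]
  field_simp

theorem phiSph_tauq_div_two_add_I_mul (hq : 1 < q) {δ : ℝ} (hδ : δ ≠ 0) (m : ℕ) :
    phiSph q ((tauq q / 2 : ℝ) + I * δ) (2 * m + 1) = -phiSph q (I * δ) (2 * m + 1) := by
  rw [phiSph_add_I_mul hq hδ, tauq_div_two_mul_log hq, exp_pi_mul_I, phiSph_I_mul hq hδ,
    map_neg, map_one, neg_one_mul, neg_one_mul, phiPoly_neg, ofReal_mul, ofReal_phiPoly, mul_neg]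

theorem sin_mul_log_ne_zero (hq : 1 < q) {α : ℝ} (hα₁ : -tauq q / 2 < α) (hα₂ : α < tauq q / 2)
    (hα₀ : α ≠ 0) : Real.sin (α * Real.log q) ≠ 0 := by
  have hlog := Real.log_pos hq
  have hπ := tauq_div_two_mul_log hq
  rw [Ne, Real.sin_eq_zero_iff_of_lt_of_lt (by nlinarith) (by nlinarith)]
  exact mul_ne_zero hα₀ hlog.ne'

end Spherical

/-- For `δ ∈ [-1/2, 0)` and every `m ≥ 0`: `φ_{iδ}(2m+1)` is a positive real,
`|φ_{α+iδ}(2m+1)| < φ_{iδ}(2m+1)` for real `α ∈ (-τ/2, τ/2) \ {0}`, and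
`φ_{τ/2+iδ}(2m+1) = -φ_{iδ}(2m+1)`. -/
theorem stmt9 (q : ℝ) (hq : 1 < q) (δ : ℝ) (hδ : δ ∈ Set.Ico (-(1/2) : ℝ) 0) (m : ℕ) :
    ((phiSph q (Complex.I * (δ : ℂ)) (2 * m + 1)).im = 0 ∧
      0 < (phiSph q (Complex.I * (δ : ℂ)) (2 * m + 1)).re) ∧
    (∀ α : ℝ, -(tauq q) / 2 < α → α < tauq q / 2 → α ≠ 0 →
      ‖phiSph q ((α : ℂ) + Complex.I * (δ : ℂ)) (2 * m + 1)‖ <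
        (phiSph q (Complex.I * (δ : ℂ)) (2 * m + 1)).re) ∧
    phiSph q (((tauq q / 2 : ℝ) : ℂ) + Complex.I * (δ : ℂ)) (2 * m + 1) =
      -phiSph q (Complex.I * (δ : ℂ)) (2 * m + 1) := by
  have hδ₀ : δ ≠ 0 := hδ.2.ne
  refine ⟨⟨?_, ?_⟩, fun α hα₁ hα₂ hα₀ =>
    norm_phiSph_add_I_mul_lt hq hδ₀ (sin_mul_log_ne_zero hq hα₁ hα₂ hα₀) m,
    phiSph_tauq_div_two_add_I_mul hq hδ₀ m⟩
  · rw [phiSph_I_mul hq hδ₀, ofReal_im]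
  · rw [phiSph_I_mul hq hδ₀, ofReal_re]
    exact mul_pos (by positivity) (phiPoly_pos hq.le (by positivity) (by positivity) m)
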